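/- arXiv:0808.0573 — 11 statements merged into one kernel-verified Lean document; each statement's English description precedes it below -/
import Mathlib

section
/- Let G be a group and a, b ∈ G satisfy a*b*a = b*a*b, and set Δ = a*b*a. Then for every natural number n, Δ^{2n} = a^{2n} * (b*a²*b)^n and also Δ^{2n} = (b*a²*b)^n * a^{2n}. (In B₃: Δ^{2n} = σ₁^{2n}(σ₂σ₁²σ₂)^n = (σ₂σ₁²σ₂)^nσ₁^{2n}, the key intermediate identity in the proofs of Theorems 2.5 and 3.1.) -/
theorem delta_two_n_factorization (G : Type*) [Group G] (a b : G)
    (h : a * b * a = b * a * b) (n : ℕ) :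
    (a * b * a) ^ (2 * n) = a ^ (2 * n) * (b * a ^ 2 * b) ^ n ∧
      (a * b * a) ^ (2 * n) = (b * a ^ 2 * b) ^ n * a ^ (2 * n) := by
  have e1 : (a * b * a) ^ 2 = a ^ 2 * (b * a ^ 2 * b) := by
    calc (a * b * a) ^ 2 = (a * b * a) * (a * b * a) := by rw [sq]
    _ = (a * b * a) * (b * a * b) := by nth_rewrite 2 [h]; rfl
    _ = a * (b * a * b) * (a * b) := by group
    _ = a * (a * b * a) * (a * b) := by rw [← h]
    _ = a ^ 2 * (b * a ^ 2 * b) := by simp [pow_two, mul_assoc]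
  have e2 : (a * b * a) ^ 2 = (b * a ^ 2 * b) * a ^ 2 := by
    calc (a * b * a) ^ 2 = (a * b * a) * (a * b * a) := by rw [sq]
    _ = (b * a * b) * (a * b * a) := by nth_rewrite 1 [h]; rfl
    _ = (b * a) * (b * a * b) * a := by group
    _ = (b * a) * (a * b * a) * a := by rw [← h]
    _ = (b * a ^ 2 * b) * a ^ 2 := by simp [pow_two, mul_assoc]
  have hc : Commute (a ^ 2) (b * a ^ 2 * b) := by
    unfold Commute SemiconjBy
    rw [← e1, ← e2]
  constructor
  · rw [pow_mul, e1, hc.mul_pow, pow_mul]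
  · rw [pow_mul, e2, (hc.symm).mul_pow, pow_mul]
end

section
/- Let G be a group and a, b ∈ G satisfy a*b*a = b*a*b, and set Δ = a*b*a. Then for every natural number n ≥ 1, Δ^{2n} = a^{2n} * b * (a²*b²)^{n-1} * a² * b. (Case 0 of the proof of Theorem 2.5: the (3,3n)-torus link braid Δ^{2n} equals the braid word σ₁^{2n}σ₂(σ₁²σ₂²)^{n-1}σ₁²σ₂, exhibiting it as a positive 3-braid of the form ∏σ₁^{p_i}σ₂^{q_i} with n+1 syllable pairs.) -/
theorem delta_two_n_positive_form (G : Type*) [Group G] (a b : G)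
    (h : a * b * a = b * a * b) (n : ℕ) (hn : 1 ≤ n) :
    (a * b * a) ^ (2 * n) =
      a ^ (2 * n) * b * (a ^ 2 * b ^ 2) ^ (n - 1) * a ^ 2 * b := by
  -- basic moving lemmas
  have da : (a * b * a) * a = b * (a * b * a) := by
    conv_lhs => rw [h]
    simp [mul_assoc]
  have db : (a * b * a) * b = a * (a * b * a) := by
    conv_rhs => rw [h]
    simp [mul_assoc]
  -- Δ² = a²ba²b
  have base : (a * b * a) ^ 2 = a ^ 2 * b * a ^ 2 * b := by
    rw [pow_two]
    nth_rewrite 2 [h]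
    rw [show a * b * a * (b * a * b) = (a * b * a * b) * (a * b) by simp [mul_assoc], db]
    simp [pow_two, mul_assoc]
  -- Δ² commutes with a and b
  have ca : Commute ((a * b * a) ^ 2) a := by
    have : (a * b * a) ^ 2 * a = a * (a * b * a) ^ 2 := by
      rw [pow_two, mul_assoc, da, ← mul_assoc, db, mul_assoc, ← pow_two]
    exact this
  have cb : Commute ((a * b * a) ^ 2) b := by
    have : (a * b * a) ^ 2 * b = b * (a * b * a) ^ 2 := by
      rw [pow_two, mul_assoc, db, ← mul_assoc, da, mul_assoc, ← pow_two]
    exact this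
  -- key inner lemma P(k)
  have P : ∀ k : ℕ, (a * b * a) ^ 2 * (b * (a ^ 2 * b ^ 2) ^ k)
      = a ^ 2 * b * (a ^ 2 * b ^ 2) ^ k * (a ^ 2 * b ^ 2) := by
    intro k
    induction k with
    | zero =>
        simp only [pow_zero, mul_one]
        rw [base]
        simp [mul_assoc, pow_two]
    | succ k ih =>
        rw [pow_succ (a ^ 2 * b ^ 2) k,
          show (a * b * a) ^ 2 * (b * ((a ^ 2 * b ^ 2) ^ k * (a ^ 2 * b ^ 2)))
            = ((a * b * a) ^ 2 * (b * (a ^ 2 * b ^ 2) ^ k)) * (a ^ 2 * b ^ 2) by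
              simp [mul_assoc], ih]
        simp [mul_assoc]
  -- main induction
  obtain ⟨m, rfl⟩ : ∃ m, n = m + 1 := ⟨n - 1, (Nat.succ_pred_eq_of_pos hn).symm⟩
  clear hn
  simp only [Nat.add_sub_cancel]
  induction m with
  | zero =>
      simpa using base
  | succ m ih =>
      have key : (a * b * a) ^ (2 * (m + 1 + 1)) =
          (a * b * a) ^ 2 * (a * b * a) ^ (2 * (m + 1)) := by
        rw [← pow_add]; congr 1; ring
      rw [key, ih]
      have c1 : (a * b * a) ^ 2 * a ^ (2 * (m + 1)) = a ^ (2 * (m + 1)) * (a * b * a) ^ 2 :=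
        (ca.pow_right _).eq
      calc (a * b * a) ^ 2 * (a ^ (2 * (m + 1)) * b * (a ^ 2 * b ^ 2) ^ m * a ^ 2 * b)
          = a ^ (2 * (m + 1)) * ((a * b * a) ^ 2 * (b * (a ^ 2 * b ^ 2) ^ m)) * (a ^ 2 * b) := by
            simp only [← mul_assoc]
            rw [c1]
        _ = a ^ (2 * (m + 1)) * (a ^ 2 * b * (a ^ 2 * b ^ 2) ^ m * (a ^ 2 * b ^ 2)) * (a ^ 2 * b) := by
            rw [P]
        _ = a ^ (2 * (m + 1 + 1)) * b * (a ^ 2 * b ^ 2) ^ (m + 1) * a ^ 2 * b := by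
            rw [pow_succ (a ^ 2 * b ^ 2) m, show 2 * (m + 1 + 1) = 2 * (m + 1) + 2 by ring,
              pow_add]
            simp [mul_assoc]
end

section
/- Let G be a group and a, b ∈ G satisfy a*b*a = b*a*b, and set Δ = a*b*a. Then for every natural number n, Δ^{2n} * a * b = a^{2n+1} * b * (a²*b²)^n. (Case 1.1 of the proof of Theorem 2.5: the (3,3n+1)-torus knot braid Δ^{2n}σ₁σ₂ equals σ₁^{2n+1}σ₂(σ₁²σ₂²)^n.) -/
theorem torus_3_3n1_form (G : Type*) [Group G] (a b : G)
    (h : a * b * a = b * a * b) (n : ℕ) :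
    (a * b * a) ^ (2 * n) * a * b =
      a ^ (2 * n + 1) * b * (a ^ 2 * b ^ 2) ^ n := by
  -- Δ a = b Δ and Δ b = a Δ
  have hda : (a * b * a) * a = b * (a * b * a) := by
    conv_lhs => rw [h]
    simp [mul_assoc]
  have hdb : (a * b * a) * b = a * (a * b * a) := by
    conv_rhs => rw [h]
    simp [mul_assoc]
  -- Δ² commutes with a and b
  have hca : Commute ((a * b * a) ^ 2) a := by
    show (a * b * a) ^ 2 * a = a * (a * b * a) ^ 2
    rw [sq, mul_assoc, hda, ← mul_assoc, hdb]
    simp [sq, mul_assoc]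
  have hcb : Commute ((a * b * a) ^ 2) b := by
    show (a * b * a) ^ 2 * b = b * (a * b * a) ^ 2
    rw [sq, mul_assoc, hdb, ← mul_assoc, hda]
    simp [sq, mul_assoc]
  -- key identity: Δ² b = a² b a² b²
  have key : (a * b * a) ^ 2 * b = a ^ 2 * b * (a ^ 2 * b ^ 2) := by
    rw [sq]
    nth_rewrite 2 [h]
    have r : a ^ 2 * b * (a ^ 2 * b ^ 2) = a * (a * b * a) * a * b * b := by
      simp [pow_two, mul_assoc]
    rw [r]
    nth_rewrite 2 [h]
    simp [mul_assoc]
  induction n with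
  | zero => simp
  | succ n ih =>
      have h2 : 2 * (n + 1) = 2 + 2 * n := by ring
      rw [h2, pow_add, mul_assoc, mul_assoc, ← mul_assoc ((a*b*a)^(2*n)) a b, ih]
      have hcan : Commute ((a * b * a) ^ 2) (a ^ (2 * n + 1)) := hca.pow_right _
      calc (a * b * a) ^ 2 * (a ^ (2 * n + 1) * b * (a ^ 2 * b ^ 2) ^ n)
          = a ^ (2 * n + 1) * ((a * b * a) ^ 2 * b) * (a ^ 2 * b ^ 2) ^ n := by
            rw [← mul_assoc, ← mul_assoc, hcan.eq, mul_assoc _ _ b]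
        _ = a ^ (2 * n + 1) * (a ^ 2 * b * (a ^ 2 * b ^ 2)) * (a ^ 2 * b ^ 2) ^ n := by
            rw [key]
        _ = a ^ (2 + 2 * n + 1) * b * (a ^ 2 * b ^ 2) ^ (n + 1) := by
            have hx : a ^ 2 * b ^ 2 * (a ^ 2 * b ^ 2) ^ n = (a ^ 2 * b ^ 2) ^ (n + 1) :=
              (pow_succ' _ _).symm
            rw [← hx, show 2 + 2 * n + 1 = 2 * n + 1 + 2 from by ring,
              pow_add a (2 * n + 1) 2]
            simp only [mul_assoc]
end

section
/- Let G be a group and a, b ∈ G satisfy a*b*a = b*a*b, and set Δ = a*b*a. Then for every natural number n, the element Δ^{2n} * (a*b)² is conjugate in G to a^{2n+3} * b * (a²*b²)^n. (Case 2.1 of the proof of Theorem 2.5: the (3,3n+2)-torus knot braid Δ^{2n}(σ₁σ₂)² is deformed by braid relations and conjugation to σ₁^{2n+3}σ₂(σ₁²σ₂²)^n.) -/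
private lemma delta_a {G : Type*} [Group G] (a b : G) (h : a * b * a = b * a * b) :
    (a * b * a) * a = b * (a * b * a) := by
  nth_rewrite 1 [h]; simp [mul_assoc]

private lemma delta_b {G : Type*} [Group G] (a b : G) (h : a * b * a = b * a * b) :
    (a * b * a) * b = a * (a * b * a) := by
  calc (a * b * a) * b = a * (b * a * b) := by simp [mul_assoc]
    _ = a * (a * b * a) := by rw [← h]

private lemma delta2_comm_a {G : Type*} [Group G] (a b : G) (h : a * b * a = b * a * b) :
    Commute ((a * b * a) ^ 2) a := by
  unfold Commute SemiconjBy
  calc (a * b * a) ^ 2 * a = (a * b * a) * ((a * b * a) * a) := by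
        rw [pow_two]; simp [mul_assoc]
    _ = (a * b * a) * (b * (a * b * a)) := by rw [delta_a a b h]
    _ = ((a * b * a) * b) * (a * b * a) := by simp [mul_assoc]
    _ = (a * (a * b * a)) * (a * b * a) := by rw [delta_b a b h]
    _ = a * (a * b * a) ^ 2 := by rw [pow_two]; simp [mul_assoc]

private lemma delta2_eq {G : Type*} [Group G] (a b : G) (h : a * b * a = b * a * b) :
    (a * b * a) ^ 2 * b = a ^ 2 * (b * (a ^ 2 * b ^ 2)) := by
  calc (a * b * a) ^ 2 * b = (a * b * a) * (b * a * b) * b := by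
        rw [pow_two]; nth_rewrite 2 [h]; rfl
    _ = a * (b * a * b) * (a * b) * b := by simp [mul_assoc]
    _ = a * (a * b * a) * (a * b) * b := by rw [← h]
    _ = a ^ 2 * (b * (a ^ 2 * b ^ 2)) := by simp [pow_two, mul_assoc]

private lemma key {G : Type*} [Group G] (a b : G) (h : a * b * a = b * a * b) : ∀ n : ℕ,
    (a * b * a) ^ (2 * n) * (a * a * a * b) = a ^ (2 * n + 3) * b * (a ^ 2 * b ^ 2) ^ n := by
  intro n
  induction n with
  | zero =>
    simp only [Nat.mul_zero, pow_zero, one_mul, mul_one, Nat.zero_add]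
    rw [show (3 : ℕ) = 2 + 1 from rfl, pow_add, pow_two, pow_one]
  | succ n ih =>
    have hc : Commute ((a * b * a) ^ 2) (a ^ (2 * n + 3)) :=
      (delta2_comm_a a b h).pow_right _
    calc (a * b * a) ^ (2 * (n + 1)) * (a * a * a * b)
        = (a * b * a) ^ 2 * ((a * b * a) ^ (2 * n) * (a * a * a * b)) := by
          rw [show 2 * (n + 1) = 2 + 2 * n by ring, pow_add]; simp [mul_assoc]
      _ = (a * b * a) ^ 2 * (a ^ (2 * n + 3) * b * (a ^ 2 * b ^ 2) ^ n) := by rw [ih]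
      _ = a ^ (2 * n + 3) * ((a * b * a) ^ 2 * b) * (a ^ 2 * b ^ 2) ^ n := by
          rw [← mul_assoc, ← mul_assoc, hc.eq, mul_assoc (a ^ (2 * n + 3))]
      _ = a ^ (2 * n + 3) * (a ^ 2 * (b * (a ^ 2 * b ^ 2))) * (a ^ 2 * b ^ 2) ^ n := by
          rw [delta2_eq a b h]
      _ = a ^ (2 * (n + 1) + 3) * b * ((a ^ 2 * b ^ 2) * (a ^ 2 * b ^ 2) ^ n) := by
          rw [show 2 * (n + 1) + 3 = (2 * n + 3) + 2 by ring]
          simp [pow_add, mul_assoc]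
      _ = a ^ (2 * (n + 1) + 3) * b * (a ^ 2 * b ^ 2) ^ (n + 1) := by
          rw [← pow_succ']

theorem case_2_1_conj (G : Type*) [Group G] (a b : G)
    (h : a * b * a = b * a * b) (n : ℕ) :
    IsConj ((a * b * a) ^ (2 * n) * (a * b) ^ 2)
      (a ^ (2 * n + 3) * b * (a ^ 2 * b ^ 2) ^ n) := by
  rw [isConj_iff]
  refine ⟨a, ?_⟩
  have hc : Commute a ((a * b * a) ^ (2 * n)) := by
    rw [pow_mul]
    exact ((delta2_comm_a a b h).pow_left n).symm
  calc a * ((a * b * a) ^ (2 * n) * (a * b) ^ 2) * a⁻¹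
      = (a * b * a) ^ (2 * n) * (a * ((a * b) ^ 2) * a⁻¹) := by
        rw [← mul_assoc, hc.eq]; simp [mul_assoc]
    _ = (a * b * a) ^ (2 * n) * (a * (a * (b * a * b)) * a⁻¹) := by
        congr 1; rw [pow_two]; simp [mul_assoc]
    _ = (a * b * a) ^ (2 * n) * (a * (a * (a * b * a)) * a⁻¹) := by rw [← h]
    _ = (a * b * a) ^ (2 * n) * (a * a * a * b) := by simp [mul_assoc]
    _ = a ^ (2 * n + 3) * b * (a ^ 2 * b ^ 2) ^ n := key a b h n
end

section
/- Let G be a group and a, b ∈ G satisfy a*b*a = b*a*b, and set Δ = a*b*a. Then for every natural number n, the element Δ^{2n+1} is conjugate in G to a^{2n+2} * b * (a²*b²)^n. (Case 3 of the proof of Theorem 2.5: the odd power Δ^{2n+1} of the half twist is deformed by braid relations and conjugation to σ₁^{2n+2}σ₂(σ₁²σ₂²)^n.) -/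
theorem case_3_conj (G : Type*) [Group G] (a b : G)
    (h : a * b * a = b * a * b) (n : ℕ) :
    IsConj ((a * b * a) ^ (2 * n + 1))
      (a ^ (2 * n + 2) * b * (a ^ 2 * b ^ 2) ^ n) := by
  -- basic braid consequences
  have l1 : (a * b * a) * a = b * (a * b * a) := by
    calc (a * b * a) * a = (b * a * b) * a := by rw [h]
      _ = b * (a * b * a) := by simp [mul_assoc]
  have l2 : (a * b * a) * b = a * (a * b * a) := by
    calc (a * b * a) * b = a * (b * a * b) := by simp [mul_assoc]
      _ = a * (a * b * a) := by rw [← h]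
  -- the full twist commutes with a
  have hc : Commute ((a * b * a) ^ 2) a := by
    unfold Commute SemiconjBy
    calc (a * b * a) ^ 2 * a = (a * b * a) * ((a * b * a) * a) := by
          rw [pow_two, mul_assoc]
      _ = (a * b * a) * (b * (a * b * a)) := by rw [l1]
      _ = ((a * b * a) * b) * (a * b * a) := by simp [mul_assoc]
      _ = (a * (a * b * a)) * (a * b * a) := by rw [l2]
      _ = a * (a * b * a) ^ 2 := by rw [pow_two, mul_assoc]
  -- the square of Δ as a positive word
  have l3 : a ^ 2 * b * a ^ 2 * b = (a * b * a) ^ 2 := by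
    calc a ^ 2 * b * a ^ 2 * b = a * (a * b * a) * (a * b) := by
          simp [pow_two, mul_assoc]
      _ = a * (b * a * b) * (a * b) := by rw [h]
      _ = (a * b * a) * (b * a * b) := by simp [mul_assoc]
      _ = (a * b * a) * (a * b * a) := by rw [← h]
      _ = (a * b * a) ^ 2 := by rw [pow_two]
  -- key identity
  have key : ∀ m : ℕ, a ^ (2 * m + 2) * b * (a ^ 2 * b ^ 2) ^ m
      = ((a * b * a) ^ 2) ^ m * (a ^ 2 * b) := by
    intro m
    induction m with
    | zero => simp
    | succ k ih =>
      have e1 : a ^ (2 * (k + 1) + 2) = a ^ (2 * k + 2) * a ^ 2 := by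
        rw [← pow_add]; ring_nf
      calc a ^ (2 * (k + 1) + 2) * b * (a ^ 2 * b ^ 2) ^ (k + 1)
          = a ^ (2 * k + 2) * (a ^ 2 * b * a ^ 2 * b) * (b * (a ^ 2 * b ^ 2) ^ k) := by
            rw [e1, pow_succ' (a ^ 2 * b ^ 2)]; simp [pow_two, mul_assoc]
        _ = a ^ (2 * k + 2) * (a * b * a) ^ 2 * (b * (a ^ 2 * b ^ 2) ^ k) := by rw [l3]
        _ = (a * b * a) ^ 2 * (a ^ (2 * k + 2) * b * (a ^ 2 * b ^ 2) ^ k) := by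
            rw [← (hc.pow_right (2 * k + 2)).eq]; simp [mul_assoc]
        _ = (a * b * a) ^ 2 * (((a * b * a) ^ 2) ^ k * (a ^ 2 * b)) := by rw [ih]
        _ = ((a * b * a) ^ 2) ^ (k + 1) * (a ^ 2 * b) := by
            rw [pow_succ' ((a * b * a) ^ 2)]; simp [mul_assoc]
  rw [isConj_iff]
  refine ⟨a, ?_⟩
  have e2 : (a * b * a) ^ (2 * n + 1) = ((a * b * a) ^ 2) ^ n * (a * b * a) := by
    rw [← pow_mul, ← pow_succ]
  rw [e2, key n]
  have hcn : a * ((a * b * a) ^ 2) ^ n = ((a * b * a) ^ 2) ^ n * a :=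
    ((hc.pow_left n).symm).eq
  calc a * (((a * b * a) ^ 2) ^ n * (a * b * a)) * a⁻¹
      = ((a * b * a) ^ 2) ^ n * (a * (a * b * a) * a⁻¹) := by
        rw [← mul_assoc, hcn]; simp [mul_assoc]
    _ = ((a * b * a) ^ 2) ^ n * (a ^ 2 * b) := by
        congr 1
        calc a * (a * b * a) * a⁻¹ = a ^ 2 * b * (a * a⁻¹) := by simp [pow_two, mul_assoc]
          _ = a ^ 2 * b := by simp
end

section
/- Let G be a group and a, b ∈ G satisfy a*b*a = b*a*b, and set Δ = a*b*a. Then for every natural number n ≥ 1 and every integer p, Δ^{2n} * a^{-p} = a^{2n-p} * b * (a²*b²)^{n-1} * a² * b, where a^{2n-p} is the integer power with exponent 2n - p. (The Case 4 reduction in the proof of Theorem 2.5: Δ^{2n}σ₁^{-p} = σ₁^{2n-p}σ₂(σ₁²σ₂²)^{n-1}σ₁²σ₂ for braids in Ω₄.) -/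
theorem case_4_reduction (G : Type*) [Group G] (a b : G)
    (h : a * b * a = b * a * b) (n : ℕ) (hn : 1 ≤ n) (p : ℤ) :
    (a * b * a) ^ (2 * n) * a ^ (-p) =
      a ^ (2 * (n : ℤ) - p) * b * (a ^ 2 * b ^ 2) ^ (n - 1) * a ^ 2 * b := by
  obtain ⟨m, rfl⟩ : ∃ m, n = m + 1 := ⟨n - 1, by omega⟩
  have h1 : a * (a * b * a) = (a * b * a) * b := by
    calc a * (a * b * a) = a * (b * a * b) := by rw [h]
      _ = (a * b * a) * b := by simp [mul_assoc]
  have h2 : b * (a * b * a) = (a * b * a) * a := by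
    calc b * (a * b * a) = (b * a * b) * a := by simp [mul_assoc]
      _ = (a * b * a) * a := by rw [h]
  have hcomm : Commute ((a * b * a) ^ 2) a := by
    show (a * b * a) ^ 2 * a = a * (a * b * a) ^ 2
    calc (a * b * a) ^ 2 * a = (a * b * a) * ((a * b * a) * a) := by simp [pow_two, mul_assoc]
      _ = (a * b * a) * (b * (a * b * a)) := by rw [h2]
      _ = ((a * b * a) * b) * (a * b * a) := by simp [mul_assoc]
      _ = (a * (a * b * a)) * (a * b * a) := by rw [h1]
      _ = a * (a * b * a) ^ 2 := by simp [pow_two, mul_assoc]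
  have hΔ2 : (a * b * a) ^ 2 = a ^ 2 * b * a ^ 2 * b := by
    calc (a * b * a) ^ 2 = (a * b * a) * (a * b * a) := by rw [pow_two]
      _ = (a * b * a) * (b * a * b) := by nth_rewrite 2 [h]; rfl
      _ = a * (b * a * b) * (a * b) := by simp [mul_assoc]
      _ = a * (a * b * a) * (a * b) := by rw [← h]
      _ = a ^ 2 * b * a ^ 2 * b := by simp [pow_two, mul_assoc]
  have main : ∀ m : ℕ, (a * b * a) ^ (2 * (m + 1)) =
      a ^ (2 * (m + 1)) * b * (a ^ 2 * b ^ 2) ^ m * a ^ 2 * b := by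
    intro m
    induction m with
    | zero => rw [show 2 * (0 + 1) = 2 from rfl, hΔ2]; simp [mul_assoc]
    | succ k ih =>
      have hc := (hcomm.pow_right (2 * (k + 1))).eq
      calc (a * b * a) ^ (2 * (k + 1 + 1))
          = (a * b * a) ^ 2 * (a * b * a) ^ (2 * (k + 1)) := by
            rw [show 2 * (k + 1 + 1) = 2 + 2 * (k + 1) from by ring, pow_add]
        _ = (a * b * a) ^ 2 * a ^ (2 * (k + 1)) *
              (b * (a ^ 2 * b ^ 2) ^ k * a ^ 2 * b) := by rw [ih]; simp [mul_assoc]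
        _ = a ^ (2 * (k + 1)) * (a * b * a) ^ 2 *
              (b * (a ^ 2 * b ^ 2) ^ k * a ^ 2 * b) := by rw [hc]
        _ = a ^ (2 * (k + 1)) * (a ^ 2 * b * a ^ 2 * b) *
              (b * (a ^ 2 * b ^ 2) ^ k * a ^ 2 * b) := by rw [hΔ2]
        _ = a ^ (2 * (k + 1 + 1)) * b * (a ^ 2 * b ^ 2) ^ (k + 1) * a ^ 2 * b := by
            rw [show 2 * (k + 1 + 1) = 2 * (k + 1) + 2 from by ring, pow_add,
              pow_succ' (a ^ 2 * b ^ 2) k]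
            simp [pow_two, mul_assoc]
  have hzc : (a * b * a) ^ (2 * (m + 1)) * a ^ (-p) =
      a ^ (-p) * (a * b * a) ^ (2 * (m + 1)) := by
    have := ((hcomm.pow_left (m + 1)).zpow_right (-p)).eq
    rwa [← pow_mul] at this
  rw [hzc, main, Nat.add_sub_cancel]
  have e2 : a ^ (2 * ((m + 1 : ℕ) : ℤ) - p) = a ^ (-p) * a ^ (2 * (m + 1)) := by
    rw [show 2 * ((m + 1 : ℕ) : ℤ) - p = -p + ((2 * (m + 1) : ℕ) : ℤ) from by
      push_cast; ring, zpow_add, zpow_natCast]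
  rw [e2]
  simp [mul_assoc]
end

section
/- Let G be a group and a, b ∈ G satisfy a*b*a = b*a*b, and set Δ = a*b*a. Then for every natural number n ≥ 1, the element Δ^{2n} * a^{-2n} is conjugate in G to (a²*b²)^n. (Case 4.1 of the proof of Theorem 2.5: the braid Δ^{2n}σ₁^{-2n} ∈ Ω₄ with p = 2n is conjugate to the positive braid (σ₁²σ₂²)^n, which yields dalt of its closure at most n−1.) -/
theorem case_4_1_conj (G : Type*) [Group G] (a b : G)
    (h : a * b * a = b * a * b) (n : ℕ) (hn : 1 ≤ n) :
    IsConj ((a * b * a) ^ (2 * n) * (a ^ (2 * n))⁻¹) ((a ^ 2 * b ^ 2) ^ n) := by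
  have h1 : (a * b * a) * a = b * (a * b * a) := by
    conv_lhs => rw [h]
    simp only [mul_assoc]
  have h2 : (a * b * a) * b = a * (a * b * a) := by
    calc a * b * a * b = a * (b * a * b) := by simp [mul_assoc]
    _ = a * (a * b * a) := by rw [← h]
  have hca : Commute ((a * b * a) ^ 2) a := by
    show (a * b * a) ^ 2 * a = a * (a * b * a) ^ 2
    rw [sq]
    calc a * b * a * (a * b * a) * a = a * b * a * ((a * b * a) * a) := by rw [mul_assoc]
    _ = a * b * a * (b * (a * b * a)) := by rw [h1]
    _ = (a * b * a * b) * (a * b * a) := by rw [← mul_assoc]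
    _ = (a * (a * b * a)) * (a * b * a) := by rw [h2]
    _ = a * ((a * b * a) * (a * b * a)) := by rw [mul_assoc]
    _ = a * (a * b * a * (a * b * a)) := by rw [← mul_assoc]
  have hsq : (a * b * a) ^ 2 = a ^ 2 * b * (a ^ 2 * b) := by
    symm
    calc a ^ 2 * b * (a ^ 2 * b) = a * (a * b * a) * (a * b) := by simp [sq, mul_assoc]
    _ = a * (b * a * b) * (a * b) := by rw [h]
    _ = (a * b * a) * (b * a * b) := by simp [mul_assoc]
    _ = (a * b * a) * (a * b * a) := by rw [← h]
    _ = (a * b * a) ^ 2 := by rw [sq]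
  have hsemi : SemiconjBy (b⁻¹ * a⁻¹ ^ 2) ((a * b * a) ^ 2 * (a ^ 2)⁻¹) (a ^ 2 * b ^ 2) := by
    unfold SemiconjBy
    rw [hsq]
    group
  have hsemiN : SemiconjBy (b⁻¹ * a⁻¹ ^ 2) (((a * b * a) ^ 2 * (a ^ 2)⁻¹) ^ n)
      ((a ^ 2 * b ^ 2) ^ n) := hsemi.pow_right n
  have hcomm : Commute ((a * b * a) ^ 2) ((a ^ 2)⁻¹) := (hca.pow_right 2).inv_right
  have hrw : (a * b * a) ^ (2 * n) * (a ^ (2 * n))⁻¹ = ((a * b * a) ^ 2 * (a ^ 2)⁻¹) ^ n := by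
    rw [hcomm.mul_pow, ← pow_mul, inv_pow, ← pow_mul]
  rw [hrw, isConj_iff]
  exact ⟨b⁻¹ * a⁻¹ ^ 2, by rw [mul_inv_eq_iff_eq_mul]; exact hsemiN⟩
end

section
/- Let G be a group and a, b ∈ G satisfy a*b*a = b*a*b, and set Δ = a*b*a. Then for every natural number n ≥ 1 and every integer q, Δ^{2n} * b^{q} = b^{2n+q} * a * (b²*a²)^{n-1} * b² * a, where b^{2n+q} is the integer power with exponent 2n + q. (Case 5 of the proof of Theorem 2.5: Δ^{2n}σ₂^{q} = σ₂^{2n+q}σ₁(σ₂²σ₁²)^{n-1}σ₂²σ₁ for braids in Ω₅.) -/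
theorem case_5_reduction (G : Type*) [Group G] (a b : G)
    (h : a * b * a = b * a * b) (n : ℕ) (hn : 1 ≤ n) (q : ℤ) :
    (a * b * a) ^ (2 * n) * b ^ q =
      b ^ (2 * (n : ℤ) + q) * a * (b ^ 2 * a ^ 2) ^ (n - 1) * b ^ 2 * a := by
  have hab : a * (a * b * a) = (a * b * a) * b := by nth_rewrite 1 [h]; group
  have hba : b * (a * b * a) = (a * b * a) * a := by nth_rewrite 2 [h]; group
  have comm : b * (a * b * a) ^ 2 = (a * b * a) ^ 2 * b := by
    calc b * (a * b * a) ^ 2 = (b * (a * b * a)) * (a * b * a) := by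
          simp [pow_two, mul_assoc]
      _ = ((a * b * a) * a) * (a * b * a) := by rw [hba]
      _ = (a * b * a) * (a * (a * b * a)) := by simp [mul_assoc]
      _ = (a * b * a) * ((a * b * a) * b) := by rw [hab]
      _ = (a * b * a) ^ 2 * b := by simp [pow_two, mul_assoc]
  have cb : Commute b ((a * b * a) ^ 2) := comm
  have base : b ^ 2 * a * b ^ 2 * a = (a * b * a) ^ 2 := by
    calc b ^ 2 * a * b ^ 2 * a = b * ((b * a * b) * (b * a)) := by
          simp [pow_two, mul_assoc]
      _ = b * ((a * b * a) * (b * a)) := by rw [h]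
      _ = (b * (a * b * a)) * (b * a) := by simp [mul_assoc]
      _ = ((a * b * a) * a) * (b * a) := by rw [hba]
      _ = (a * b * a) ^ 2 := by simp [pow_two, mul_assoc]
  have key : ∀ k : ℕ, (a * b * a) ^ (2 * (k + 1)) =
      b ^ (2 * (k + 1)) * a * (b ^ 2 * a ^ 2) ^ k * b ^ 2 * a := by
    intro k
    induction k with
    | zero => simpa using base.symm
    | succ k ih =>
      have h1 : (a * b * a) ^ (2 * (k + 1 + 1)) =
          (a * b * a) ^ 2 * (a * b * a) ^ (2 * (k + 1)) := by
        rw [← pow_add]; ring_nf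
      have h2 : Commute (b ^ (2 * (k + 1))) ((a * b * a) ^ 2) := cb.pow_left _
      have hexp : 2 * (k + 1 + 1) = 2 * (k + 1) + 2 := by ring
      calc (a * b * a) ^ (2 * (k + 1 + 1))
          = (a * b * a) ^ 2 * ((a * b * a) ^ (2 * (k + 1))) := h1
        _ = (a * b * a) ^ 2 * (b ^ (2 * (k + 1)) * a * (b ^ 2 * a ^ 2) ^ k * b ^ 2 * a) := by
            rw [ih]
        _ = ((a * b * a) ^ 2 * b ^ (2 * (k + 1))) * (a * (b ^ 2 * a ^ 2) ^ k * (b ^ 2 * a)) := by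
            simp [mul_assoc]
        _ = (b ^ (2 * (k + 1)) * (a * b * a) ^ 2) * (a * (b ^ 2 * a ^ 2) ^ k * (b ^ 2 * a)) := by
            rw [h2.eq]
        _ = (b ^ (2 * (k + 1)) * (b ^ 2 * a * b ^ 2 * a)) * (a * (b ^ 2 * a ^ 2) ^ k * (b ^ 2 * a)) := by
            rw [base]
        _ = (b ^ (2 * (k + 1)) * b ^ 2) * (a * ((b ^ 2 * a ^ 2) * (b ^ 2 * a ^ 2) ^ k) * (b ^ 2 * a)) := by
            simp [pow_two, mul_assoc]
        _ = b ^ (2 * (k + 1 + 1)) * (a * (b ^ 2 * a ^ 2) ^ (k + 1) * (b ^ 2 * a)) := by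
            rw [← pow_succ', ← pow_add, hexp]
        _ = b ^ (2 * (k + 1 + 1)) * a * (b ^ 2 * a ^ 2) ^ (k + 1) * b ^ 2 * a := by
            simp [mul_assoc]
  obtain ⟨k, rfl⟩ : ∃ k, n = k + 1 := ⟨n - 1, (Nat.succ_pred_eq_of_pos hn).symm⟩
  have czb : Commute (b ^ q) ((a * b * a) ^ (2 * (k + 1))) := by
    have hrw : (a * b * a) ^ (2 * (k + 1)) = ((a * b * a) ^ 2) ^ (k + 1) := by
      rw [← pow_mul]
    rw [hrw]
    exact (cb.zpow_left q).pow_right _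
  rw [← czb.eq, key k]
  have hz : b ^ (2 * ((k : ℤ) + 1) + q) = b ^ (2 * (k + 1)) * b ^ q := by
    rw [← zpow_natCast b (2 * (k + 1)), ← zpow_add]
    push_cast
    ring_nf
  push_cast
  rw [hz]
  have hbb : b ^ q * b ^ (2 * (k + 1)) = b ^ (2 * (k + 1)) * b ^ q :=
    (((Commute.refl b).zpow_left q).pow_right (2 * (k + 1))).eq
  calc b ^ q * (b ^ (2 * (k + 1)) * a * (b ^ 2 * a ^ 2) ^ k * b ^ 2 * a)
      = (b ^ q * b ^ (2 * (k + 1))) * (a * (b ^ 2 * a ^ 2) ^ k * (b ^ 2 * a)) := by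
        simp [mul_assoc]
    _ = (b ^ (2 * (k + 1)) * b ^ q) * (a * (b ^ 2 * a ^ 2) ^ k * (b ^ 2 * a)) := by rw [hbb]
    _ = b ^ (2 * (k + 1)) * b ^ q * a * (b ^ 2 * a ^ 2) ^ k * b ^ 2 * a := by
        simp [mul_assoc]
end

section
/- Let G be a group and a, b ∈ G satisfy a*b*a = b*a*b, and set Δ = a*b*a. Then for every natural number n ≥ 1 and every element w ∈ G, the element Δ^{2n} * w is conjugate in G to a * (b²*a²)^{n-1} * b² * a * w * b^{2n}. (Case 6.1 of the proof of Theorem 2.5, stated for an arbitrary word w: specializing to w = ∏_{i=1}^{r} σ₁^{-p_i}σ₂^{q_i} gives the paper's deformation of Δ^{2n}∏σ₁^{-p_i}σ₂^{q_i} ∈ Ω₆ to σ₁(σ₂²σ₁²)^{n-1}σ₂²σ₁^{-p_1+1}σ₂^{q_1}(∏_{i=2}^{r-1}σ₁^{-p_i}σ₂^{q_i})σ₁^{-p_r}σ₂^{q_r+2n}.) -/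
section aux
variable {G : Type*} [Group G] {a b : G}

lemma braid_Da (h : a * b * a = b * a * b) :
    (a * b * a) * a = b * (a * b * a) := by
  nth_rewrite 1 [h]; simp [mul_assoc]

lemma braid_Db (h : a * b * a = b * a * b) :
    (a * b * a) * b = a * (a * b * a) := by
  nth_rewrite 2 [h]; simp [mul_assoc]

lemma braid_sq_comm_a (h : a * b * a = b * a * b) :
    (a * b * a) ^ 2 * a = a * (a * b * a) ^ 2 := by
  calc (a * b * a) ^ 2 * a = (a * b * a) * ((a * b * a) * a) := by
        simp [pow_succ, mul_assoc]
    _ = (a * b * a) * (b * (a * b * a)) := by rw [braid_Da h]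
    _ = ((a * b * a) * b) * (a * b * a) := by simp [mul_assoc]
    _ = (a * (a * b * a)) * (a * b * a) := by rw [braid_Db h]
    _ = a * (a * b * a) ^ 2 := by simp [pow_succ, mul_assoc]

lemma braid_sq_comm_b (h : a * b * a = b * a * b) :
    (a * b * a) ^ 2 * b = b * (a * b * a) ^ 2 := by
  calc (a * b * a) ^ 2 * b = (a * b * a) * ((a * b * a) * b) := by
        simp [pow_succ, mul_assoc]
    _ = (a * b * a) * (a * (a * b * a)) := by rw [braid_Db h]
    _ = ((a * b * a) * a) * (a * b * a) := by simp [mul_assoc]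
    _ = (b * (a * b * a)) * (a * b * a) := by rw [braid_Da h]
    _ = b * (a * b * a) ^ 2 := by simp [pow_succ, mul_assoc]

lemma braid_sq_comm_bk (h : a * b * a = b * a * b) (k : ℕ) :
    (a * b * a) ^ 2 * b ^ k = b ^ k * (a * b * a) ^ 2 := by
  have : Commute ((a * b * a) ^ 2) b := braid_sq_comm_b h
  exact (this.pow_right k).eq

lemma braid_step (h : a * b * a = b * a * b) :
    (a * b * a) ^ 2 * a = b ^ 2 * a * b ^ 2 * a ^ 2 := by
  calc (a * b * a) ^ 2 * a = (a * b * a) * (a * b * a) * a := by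
        simp [pow_succ, mul_assoc]
    _ = (b * a * b) * (a * b * a) * a := by nth_rewrite 1 [h]; rfl
    _ = b * (a * b * a) * (b * a * a) := by simp [mul_assoc]
    _ = b * (b * a * b) * (b * a * a) := by rw [h]
    _ = b ^ 2 * a * b ^ 2 * a ^ 2 := by simp [pow_succ, mul_assoc]

lemma braid_claim (h : a * b * a = b * a * b) (m : ℕ) :
    (a * b * a) ^ 2 * (a * (b ^ 2 * a ^ 2) ^ m * b ^ 2 * a)
      = b ^ 2 * (a * (b ^ 2 * a ^ 2) ^ (m + 1) * b ^ 2 * a) := by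
  calc (a * b * a) ^ 2 * (a * (b ^ 2 * a ^ 2) ^ m * b ^ 2 * a)
      = ((a * b * a) ^ 2 * a) * ((b ^ 2 * a ^ 2) ^ m * (b ^ 2 * a)) := by
        simp [mul_assoc]
    _ = (b ^ 2 * a * b ^ 2 * a ^ 2) * ((b ^ 2 * a ^ 2) ^ m * (b ^ 2 * a)) := by
        rw [braid_step h]
    _ = b ^ 2 * (a * ((b ^ 2 * a ^ 2) * (b ^ 2 * a ^ 2) ^ m) * b ^ 2 * a) := by
        simp [mul_assoc]
    _ = b ^ 2 * (a * (b ^ 2 * a ^ 2) ^ (m + 1) * b ^ 2 * a) := by rw [← pow_succ']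

lemma braid_key (h : a * b * a = b * a * b) (m : ℕ) :
    (a * b * a) ^ (2 * (m + 1))
      = b ^ (2 * (m + 1)) * (a * (b ^ 2 * a ^ 2) ^ m * b ^ 2 * a) := by
  induction m with
  | zero =>
    calc (a * b * a) ^ (2 * (0 + 1)) = (a * b * a) * (a * b * a) := by
          norm_num [pow_succ, mul_assoc]
      _ = (b * a * b) * (a * b * a) := by nth_rewrite 1 [h]; rfl
      _ = b * (a * b * a) * (b * a) := by simp [mul_assoc]
      _ = b * (b * a * b) * (b * a) := by rw [h]
      _ = b ^ (2 * (0 + 1)) * (a * (b ^ 2 * a ^ 2) ^ 0 * b ^ 2 * a) := by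
          norm_num [pow_succ, mul_assoc]
  | succ m ih =>
    calc (a * b * a) ^ (2 * (m + 1 + 1))
        = (a * b * a) ^ 2 * (a * b * a) ^ (2 * (m + 1)) := by
          rw [show 2 * (m + 1 + 1) = 2 + 2 * (m + 1) from by ring, pow_add]
      _ = (a * b * a) ^ 2 * (b ^ (2 * (m + 1)) * (a * (b ^ 2 * a ^ 2) ^ m * b ^ 2 * a)) := by
          rw [ih]
      _ = b ^ (2 * (m + 1)) * ((a * b * a) ^ 2 * (a * (b ^ 2 * a ^ 2) ^ m * b ^ 2 * a)) := by
          rw [← mul_assoc, braid_sq_comm_bk h, mul_assoc]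
      _ = b ^ (2 * (m + 1)) * (b ^ 2 * (a * (b ^ 2 * a ^ 2) ^ (m + 1) * b ^ 2 * a)) := by
          rw [braid_claim h]
      _ = b ^ (2 * (m + 1 + 1)) * (a * (b ^ 2 * a ^ 2) ^ (m + 1) * b ^ 2 * a) := by
          rw [show 2 * (m + 1 + 1) = 2 * (m + 1) + 2 from by ring, pow_add]
          simp [mul_assoc, pow_succ]

end aux

theorem case_6_1_conj (G : Type*) [Group G] (a b : G)
    (h : a * b * a = b * a * b) (n : ℕ) (hn : 1 ≤ n) (w : G) :
    IsConj ((a * b * a) ^ (2 * n) * w)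
      (a * (b ^ 2 * a ^ 2) ^ (n - 1) * b ^ 2 * a * w * b ^ (2 * n)) := by
  obtain ⟨m, rfl⟩ : ∃ m, n = m + 1 := ⟨n - 1, (Nat.succ_pred_eq_of_pos hn).symm⟩
  rw [braid_key h m, Nat.add_sub_cancel]
  generalize (b : G) ^ (2 * (m + 1)) = B
  generalize (b ^ 2 * a ^ 2 : G) ^ m = X
  refine isConj_iff.mpr ⟨a * X * b ^ 2 * a * w, ?_⟩
  simp [mul_assoc]
end

section
/- Let G be a group and a, b ∈ G satisfy a*b*a = b*a*b, and set Δ = a*b*a. Then for every natural number n ≥ 1 and every element w ∈ G, the element Δ^{2n} * w is conjugate in G to (a²*b²)^{n-1} * a² * b * a^{2n} * w * b. (The initial deformation in the proof of Theorem 3.1, stated for an arbitrary word w: specializing to w = ∏_{i=1}^{r} σ₁^{p_i}σ₂^{q_i} gives that Δ^{2n}∏σ₁^{p_i}σ₂^{q_i} is conjugate to (σ₁²σ₂²)^{n-1}σ₁²σ₂σ₁^{2n+p_1}σ₂^{q_1}(∏_{i=2}^{r-1}σ₁^{p_i}σ₂^{q_i})σ₁^{p_r}σ₂^{q_r+1},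 a positive braid with n+r syllable pairs, whence dalt of the closure is at most n+r−1.) -/
theorem thm31_initial_conj (G : Type*) [Group G] (a b : G)
    (h : a * b * a = b * a * b) (n : ℕ) (hn : 1 ≤ n) (w : G) :
    IsConj ((a * b * a) ^ (2 * n) * w)
      ((a ^ 2 * b ^ 2) ^ (n - 1) * a ^ 2 * b * a ^ (2 * n) * w * b) := by
  have hDa : (a * b * a) * a = b * (a * b * a) := by
    calc (a * b * a) * a = (b * a * b) * a := by rw [h]
      _ = b * (a * b * a) := by group
  have hDb : (a * b * a) * b = a * (a * b * a) := by
    calc (a * b * a) * b = a * (b * a * b) := by group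
      _ = a * (a * b * a) := by rw [← h]
  have hD2 : (a * b * a) ^ 2 = b * a ^ 2 * b * a ^ 2 := by
    calc (a * b * a) ^ 2 = (b * a * b) * (a * b * a) := by rw [sq, h]
      _ = b * a * ((b * a * b) * a) := by group
      _ = b * a * ((a * b * a) * a) := by rw [← h]
      _ = b * a ^ 2 * b * a ^ 2 := by simp [sq, mul_assoc]
  have hca : Commute ((a * b * a) ^ 2) a := by
    show (a * b * a) ^ 2 * a = a * (a * b * a) ^ 2
    calc (a * b * a) ^ 2 * a = (a * b * a) * ((a * b * a) * a) := by rw [sq]; group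
      _ = (a * b * a) * (b * (a * b * a)) := by rw [hDa]
      _ = ((a * b * a) * b) * (a * b * a) := by group
      _ = (a * (a * b * a)) * (a * b * a) := by rw [hDb]
      _ = a * (a * b * a) ^ 2 := by rw [sq]; group
  have key : ∀ m : ℕ, (a * b * a) ^ (2 * (m + 1))
      = b * (a ^ 2 * b ^ 2) ^ m * a ^ 2 * b * a ^ (2 * (m + 1)) := by
    intro m
    induction m with
    | zero => simpa using hD2
    | succ k ih =>
      have hcak : Commute ((a * b * a) ^ 2) (a ^ (2 * (k + 1))) := hca.pow_right _
      have e2 : 2 * (k + 2) = 2 * (k + 1) + 2 := by ring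
      calc (a * b * a) ^ (2 * (k + 1 + 1))
          = (a * b * a) ^ (2 * (k + 1)) * (a * b * a) ^ 2 := by
            rw [show k + 1 + 1 = k + 2 from rfl, e2, pow_add]
        _ = b * (a ^ 2 * b ^ 2) ^ k * a ^ 2 * b * a ^ (2 * (k + 1)) * (a * b * a) ^ 2 := by
            rw [ih]
        _ = b * (a ^ 2 * b ^ 2) ^ k * a ^ 2 * b * (a ^ (2 * (k + 1)) * (a * b * a) ^ 2) := by
            group
        _ = b * (a ^ 2 * b ^ 2) ^ k * a ^ 2 * b * ((a * b * a) ^ 2 * a ^ (2 * (k + 1))) := by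
            rw [← hcak.eq]
        _ = b * (a ^ 2 * b ^ 2) ^ k * a ^ 2 * b * (b * a ^ 2 * b * a ^ 2 * a ^ (2 * (k + 1))) := by
            rw [hD2]
        _ = b * (a ^ 2 * b ^ 2) ^ (k + 1) * a ^ 2 * b * a ^ (2 * (k + 1 + 1)) := by
            rw [pow_succ (a ^ 2 * b ^ 2), show 2 * (k + 1 + 1) = 2 * (k + 1) + 2 from by ring, pow_add]
            group
            simp [pow_two, zpow_two, mul_assoc]
  obtain ⟨m, rfl⟩ : ∃ m, n = m + 1 := ⟨n - 1, (Nat.succ_pred_eq_of_pos hn).symm⟩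
  rw [isConj_iff]
  refine ⟨b⁻¹, ?_⟩
  rw [key m, show m + 1 - 1 = m from rfl]
  group
end

section
/- Let G be a group and a, b ∈ G satisfy a*b*a = b*a*b, and set Δ = a*b*a. Let n, r be natural numbers with r ≥ 1, and let p, q : Fin r → ℕ satisfy p i ≥ 2 and q i ≥ 2 for all i. Then the element Δ^{2n} * ∏_{i=0}^{r-1} (a^{p i} * b^{q i}) (ordered product) is conjugate in G to Δ^{2(n+r)} * ∏_{i=0}^{r-1} (a⁻¹ * b^{p i - 2} * a⁻¹ * b^{q i - 2}) (ordered product). (The braid-word deformation in the proof of Lemma 3.6: Δ^{2n}∏_{i=1}^{r}σ₁^{p_i}σ₂^{q_i} is conjugate to Δ^{2n+2r}∏_{i=1}^{r}σ₁^{-1}σ₂^{p_i-2}σ₁^{-1}σ₂^{q_i-2}, which reduces the signature of the closure to Erle's formula and yields σ = 4n − 2r + Σ(p_i + q_i).) -/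
theorem lemma_3_6_deformation (G : Type*) [Group G] (a b : G)
    (h : a * b * a = b * a * b) (n r : ℕ) (hr : 1 ≤ r)
    (p q : Fin r → ℕ) (hp : ∀ i, 2 ≤ p i) (hq : ∀ i, 2 ≤ q i) :
    IsConj
      ((a * b * a) ^ (2 * n) *
        (List.ofFn (fun i : Fin r => a ^ p i * b ^ q i)).prod)
      ((a * b * a) ^ (2 * (n + r)) *
        (List.ofFn (fun i : Fin r =>
          a⁻¹ * b ^ (p i - 2) * a⁻¹ * b ^ (q i - 2))).prod) := by
  obtain ⟨d, hd⟩ : ∃ d, d = a * b * a := ⟨_, rfl⟩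
  rw [← hd]
  have f3 : d = b * a * b := hd.trans h
  -- basic moves
  have h1 : d * a = b * d := by
    rw [hd]; conv_lhs => rw [h]
    group
  have h2 : d * b = a * d := by
    rw [hd]; conv_rhs => rw [h]
    group
  have f1 : d * a⁻¹ = b⁻¹ * d := by
    have e : b * (d * a⁻¹) = b * (b⁻¹ * d) := by
      rw [← mul_assoc, ← h1]; group
    exact mul_left_cancel e
  have f2 : ∀ k : ℕ, d * b ^ k = a ^ k * d := by
    intro k
    induction k with
    | zero => group
    | succ k ih =>
      calc d * b ^ (k+1) = (d * b ^ k) * b := by rw [pow_succ]; group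
        _ = a ^ k * (d * b) := by rw [ih]; group
        _ = a ^ (k+1) * d := by rw [h2, pow_succ]; group
  have f4 : ∀ k : ℕ, a ^ k * (b * a) = (b * a) * b ^ k := by
    intro k
    have e : a ^ k * (b * a) * b = (b * a) * b ^ k * b := by
      calc a ^ k * (b * a) * b = a ^ k * (b * a * b) := by group
        _ = a ^ k * d := by rw [← f3]
        _ = d * b ^ k := (f2 k).symm
        _ = (b * a * b) * b ^ k := by rw [f3]
        _ = (b * a) * b ^ k * b := by group
    exact mul_right_cancel e
  -- key per-factor identity
  have key : ∀ P Q : ℕ,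
      b * (a ^ (P+2) * b ^ (Q+2)) * b⁻¹ = d ^ 2 * (a⁻¹ * b ^ P * a⁻¹ * b ^ Q) := by
    intro P Q
    have e1 : d ^ 2 * (a⁻¹ * b ^ P * a⁻¹ * b ^ Q)
        = d * b⁻¹ * a ^ P * b⁻¹ * a ^ Q * d := by
      calc d ^ 2 * (a⁻¹ * b ^ P * a⁻¹ * b ^ Q)
          = d * (d * a⁻¹) * (b ^ P * a⁻¹ * b ^ Q) := by rw [pow_two]; group
        _ = d * (b⁻¹ * d) * (b ^ P * a⁻¹ * b ^ Q) := by rw [f1]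
        _ = d * b⁻¹ * (d * b ^ P) * (a⁻¹ * b ^ Q) := by group
        _ = d * b⁻¹ * (a ^ P * d) * (a⁻¹ * b ^ Q) := by rw [f2]
        _ = d * b⁻¹ * a ^ P * (d * a⁻¹) * b ^ Q := by group
        _ = d * b⁻¹ * a ^ P * (b⁻¹ * d) * b ^ Q := by rw [f1]
        _ = d * b⁻¹ * a ^ P * b⁻¹ * (d * b ^ Q) := by group
        _ = d * b⁻¹ * a ^ P * b⁻¹ * (a ^ Q * d) := by rw [f2]
        _ = d * b⁻¹ * a ^ P * b⁻¹ * a ^ Q * d := by group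
    rw [e1]
    refine Eq.symm ?_
    calc d * b⁻¹ * a ^ P * b⁻¹ * a ^ Q * d
        = (b * a * b) * b⁻¹ * a ^ P * b⁻¹ * a ^ Q * (a * b * a) := by rw [← f3, ← hd]
      _ = b * a ^ (P+1) * b⁻¹ * (a ^ (Q+1) * (b * a)) := by
          rw [pow_succ a P, pow_succ a Q]; group
      _ = b * a ^ (P+1) * b⁻¹ * ((b * a) * b ^ (Q+1)) := by rw [f4]
      _ = b * (a ^ (P+2) * b ^ (Q+2)) * b⁻¹ := by
          rw [show P+2 = (P+1)+1 from rfl, show Q+2 = (Q+1)+1 from rfl,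
            pow_succ a (P+1), pow_succ b (Q+1)]
          group
  -- commutation of d^2
  have ca : Commute (d ^ 2) a := by
    show d ^ 2 * a = a * d ^ 2
    calc d ^ 2 * a = d * (d * a) := by rw [pow_two]; group
      _ = (d * b) * d := by rw [h1]; group
      _ = a * d ^ 2 := by rw [h2, pow_two]; group
  have cb : Commute (d ^ 2) b := by
    show d ^ 2 * b = b * d ^ 2
    calc d ^ 2 * b = d * (d * b) := by rw [pow_two]; group
      _ = (d * a) * d := by rw [h2]; group
      _ = b * d ^ 2 := by rw [h1, pow_two]; group
  have cfac : ∀ P Q : ℕ, Commute (d ^ 2) (a⁻¹ * b ^ P * a⁻¹ * b ^ Q) := fun P Q =>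
    ((ca.inv_right.mul_right (cb.pow_right P)).mul_right ca.inv_right).mul_right
      (cb.pow_right Q)
  -- list version
  have main : ∀ l : List (ℕ × ℕ),
      b * (l.map (fun x => a ^ (x.1+2) * b ^ (x.2+2))).prod * b⁻¹
        = d ^ (2 * l.length) * (l.map (fun x => a⁻¹ * b ^ x.1 * a⁻¹ * b ^ x.2)).prod := by
    intro l
    induction l with
    | nil => simp
    | cons hd' t ih =>
      simp only [List.map_cons, List.prod_cons, List.length_cons]
      have hc := ((cfac hd'.1 hd'.2).pow_left t.length).eq
      calc b * ((a ^ (hd'.1+2) * b ^ (hd'.2+2)) * (t.map (fun x => a ^ (x.1+2) * b ^ (x.2+2))).prod) * b⁻¹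
          = (b * (a ^ (hd'.1+2) * b ^ (hd'.2+2)) * b⁻¹) *
            (b * (t.map (fun x => a ^ (x.1+2) * b ^ (x.2+2))).prod * b⁻¹) := by group
        _ = (d ^ 2 * (a⁻¹ * b ^ hd'.1 * a⁻¹ * b ^ hd'.2)) *
            (d ^ (2 * t.length) * (t.map (fun x => a⁻¹ * b ^ x.1 * a⁻¹ * b ^ x.2)).prod) := by
            rw [key, ih]
        _ = d ^ 2 * ((a⁻¹ * b ^ hd'.1 * a⁻¹ * b ^ hd'.2) * (d ^ 2) ^ t.length) *
            (t.map (fun x => a⁻¹ * b ^ x.1 * a⁻¹ * b ^ x.2)).prod := by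
            rw [pow_mul]; group
        _ = d ^ 2 * ((d ^ 2) ^ t.length * (a⁻¹ * b ^ hd'.1 * a⁻¹ * b ^ hd'.2)) *
            (t.map (fun x => a⁻¹ * b ^ x.1 * a⁻¹ * b ^ x.2)).prod := by rw [hc]
        _ = d ^ (2 * (t.length + 1)) *
            ((a⁻¹ * b ^ hd'.1 * a⁻¹ * b ^ hd'.2) *
              (t.map (fun x => a⁻¹ * b ^ x.1 * a⁻¹ * b ^ x.2)).prod) := by
            rw [pow_mul]; group
  -- assemble
  rw [isConj_iff]
  refine ⟨b, ?_⟩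
  set l : List (ℕ × ℕ) := List.ofFn (fun i : Fin r => (p i - 2, q i - 2)) with hl
  have hl1 : List.ofFn (fun i : Fin r => a ^ p i * b ^ q i)
      = l.map (fun x => a ^ (x.1+2) * b ^ (x.2+2)) := by
    rw [hl, List.map_ofFn]
    exact congrArg List.ofFn (funext fun i => by
      simp [Function.comp, Nat.sub_add_cancel (hp i), Nat.sub_add_cancel (hq i)])
  have hl2 : List.ofFn (fun i : Fin r => a⁻¹ * b ^ (p i - 2) * a⁻¹ * b ^ (q i - 2))
      = l.map (fun x => a⁻¹ * b ^ x.1 * a⁻¹ * b ^ x.2) := by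
    rw [hl, List.map_ofFn]; rfl
  have hlen : l.length = r := by rw [hl, List.length_ofFn]
  rw [hl1, hl2]
  have cbn : b * d ^ (2 * n) = d ^ (2 * n) * b := by
    rw [pow_mul]; exact ((cb.pow_left n).symm).eq
  calc b * (d ^ (2*n) * (l.map (fun x => a ^ (x.1+2) * b ^ (x.2+2))).prod) * b⁻¹
      = (b * d ^ (2*n)) * ((l.map (fun x => a ^ (x.1+2) * b ^ (x.2+2))).prod * b⁻¹) := by group
    _ = d ^ (2*n) * (b * (l.map (fun x => a ^ (x.1+2) * b ^ (x.2+2))).prod * b⁻¹) := by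
        rw [cbn]; group
    _ = d ^ (2*n) * (d ^ (2 * l.length) * (l.map (fun x => a⁻¹ * b ^ x.1 * a⁻¹ * b ^ x.2)).prod) := by
        rw [main]
    _ = d ^ (2 * (n + r)) * (l.map (fun x => a⁻¹ * b ^ x.1 * a⁻¹ * b ^ x.2)).prod := by
        rw [hlen, show 2 * (n + r) = 2*n + 2*r from by ring, pow_add]; group
end
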